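/- Let V be a finite-dimensional real vector space with a (possibly degenerate) skew-symmetric bilinear form σ, and suppose V = E ⊕ F where both E and F are isotropic subspaces (σ vanishes identically on E×E and on F×F), F ≠ 0, and F intersects the kernel of σ trivially (for every nonzero f ∈ F there exists u ∈ V with σ(f,u) ≠ 0). Let W be a linear subspace of End(V) such that every A ∈ W annihilates E and maps F into E, and such that W contains no nonzero element of rank ≤ 1. Then whenever a linear map φ : V → W and a vector v ∈ V satisfy φ(a)b − φ(b)a = σ(a,b)·v for all a,b ∈ V, one has v = 0 and φ(e) = 0 for all e ∈ E. (Consequently, the modified first prolongation of W coincides with its standard first prolongation.) -/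

import Mathlib

/-!
On `E` the prolongation equation degenerates: `φ(b)` kills `e ∈ E`, so `φ(e)b = σ(e,b)·v`, i.e.
`φ(e)` has rank at most one and must vanish. Then for `f ∈ F` and `e ∈ E` both terms of the
equation vanish, leaving `σ(f,e)·v = 0`; since `F` is isotropic and meets `ker σ` trivially, some
such `σ(f,e)` is nonzero, so `v = 0`.
-/

open Module LinearMap

theorem LinearMap.finrank_range_smulRight_le_one {K M₁ M : Type*} [DivisionRing K]
    [AddCommGroup M₁] [Module K M₁] [AddCommGroup M] [Module K M] (f : M₁ →ₗ[K] K) (x : M) :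
    finrank K (range (f.smulRight x)) ≤ 1 := by
  have hle : range (f.smulRight x) ≤ K ∙ x := by
    rintro _ ⟨y, rfl⟩
    exact Submodule.smul_mem _ _ (Submodule.mem_span_singleton_self x)
  simpa using (Submodule.finrank_mono hle).trans (finrank_span_le_card ({x} : Set M))

theorem LinearMap.exists_mem_apply_ne_zero_of_codisjoint {R M N : Type*} [Semiring R]
    [AddCommMonoid M] [Module R M] [AddCommMonoid N] [Module R N] {E F : Submodule R M}
    (hEF : Codisjoint E F) {g : M →ₗ[R] N} (hF : F ≤ ker g) (hg : g ≠ 0) :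
    ∃ e ∈ E, g e ≠ 0 := by
  by_contra! hE
  refine hg (ker_eq_top.mp (top_le_iff.mp ?_))
  rw [← hEF.eq_top]
  exact sup_le (fun e he => hE e he) hF

theorem apply_eq_smulRight_of_prolongation {R V : Type*} [CommRing R] [AddCommGroup V]
    [Module R V] {σ : V →ₗ[R] V →ₗ[R] R} {φ : V →ₗ[R] V →ₗ[R] V} {v : V}
    (hv : ∀ a b : V, φ a b - φ b a = σ a b • v) {e : V} (he : ∀ z : V, φ z e = 0) :
    φ e = (σ e).smulRight v :=
  LinearMap.ext fun x => by simpa [he x] using hv e x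

theorem stmt_5 (V : Type*) [AddCommGroup V] [Module ℝ V]
    (σ : V →ₗ[ℝ] V →ₗ[ℝ] ℝ)
    (E F : Submodule ℝ V) (hcompl : IsCompl E F)
    (hF : ∀ x ∈ F, ∀ y ∈ F, σ x y = 0)
    (hFne : F ≠ ⊥)
    (hker : ∀ f ∈ F, f ≠ 0 → ∃ u : V, σ f u ≠ 0)
    (W : Submodule ℝ (V →ₗ[ℝ] V))
    (hWE : ∀ A ∈ W, ∀ e ∈ E, A e = 0)
    (hrank : ∀ A ∈ W, Module.finrank ℝ (LinearMap.range A) ≤ 1 → A = 0)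
    (φ : V →ₗ[ℝ] (V →ₗ[ℝ] V)) (hφW : ∀ z : V, φ z ∈ W)
    (v : V) (hv : ∀ a b : V, φ a b - φ b a = σ a b • v) :
    v = 0 ∧ ∀ e ∈ E, φ e = 0 := by
  have hφE : ∀ e ∈ E, φ e = 0 := fun e he => hrank _ (hφW e) <| by
    rw [apply_eq_smulRight_of_prolongation hv fun z => hWE _ (hφW z) e he]
    exact finrank_range_smulRight_le_one _ _
  refine ⟨?_, hφE⟩
  obtain ⟨f, hfF, hf0⟩ := Submodule.exists_mem_ne_zero_of_ne_bot hFne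
  obtain ⟨u, hu⟩ := hker f hfF hf0
  obtain ⟨e, he, hfe⟩ := exists_mem_apply_ne_zero_of_codisjoint hcompl.codisjoint
    (g := σ f) (fun y hy => hF f hfF y hy) (fun h => hu (by simp [h]))
  have hσv : σ f e • v = 0 := by simpa [hWE _ (hφW f) e he, hφE e he] using (hv f e).symm
  exact (smul_eq_zero.mp hσv).resolve_left hfe
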